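/- Let X be a topological space, x ∈ X, and let H be a subgroup of π₁(X, x). If X is homotopically path Hausdorff relative to H, then π_H^qs(X, x) = H. -/

import Mathlib

open unitInterval

noncomputable section

attribute [local instance] Path.Homotopic.setoid

variable {X Y : Type*} [TopologicalSpace X] [TopologicalSpace Y]

/-- `HClose f g` : the path `f` is homotopically close to the path `g` rel `∂I`:
for every partition `0 = t₀ < t₁ < ⋯ < tₙ = 1` and every sequence of open sets
`U₁, …, Uₙ` with `g [tᵢ₋₁, tᵢ] ⊆ Uᵢ`, there is a path `γ`, homotopic to `f` rel `∂I`,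
with `γ [tᵢ₋₁, tᵢ] ⊆ Uᵢ` and `γ tᵢ = g tᵢ` for all `i`. -/
def HClose {a b : X} (f g : Path a b) : Prop :=
  ∀ (n : ℕ) (t : Fin (n + 1) → I), t 0 = 0 → t (Fin.last n) = 1 → StrictMono t →
    ∀ U : Fin n → Set X, (∀ i, IsOpen (U i)) →
      (∀ i : Fin n, g '' Set.Icc (t i.castSucc) (t i.succ) ⊆ U i) →
      ∃ γ : Path a b,
        (∀ i : Fin n, γ '' Set.Icc (t i.castSucc) (t i.succ) ⊆ U i) ∧
        (∀ i : Fin (n + 1), γ (t i) = g (t i)) ∧ γ.Homotopic f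

/-- The class of a loop at `x` as an element of the fundamental group. -/
def pathClass {x : X} (f : Path x x) : FundamentalGroup X x :=
  FundamentalGroup.fromPath ⟦f⟧

/-- The `H`-quasi-small loop set `π_H^qs(X, x)`. -/
def qsSet (x : X) (H : Set (FundamentalGroup X x)) : Set (FundamentalGroup X x) :=
  { p | ∃ f h : Path x x, pathClass f = p ∧ pathClass h ∈ H ∧ HClose f h }

/-- The quasi-small loop group `π₁^qs(X, x)`. -/
def qs (x : X) : Set (FundamentalGroup X x) :=
  qsSet x (⊥ : Subgroup (FundamentalGroup X x))

/-- The Spanier group of `(X, x)` with respect to the cover `𝒰`. -/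
def spanierCover (x : X) (𝒰 : Set (Set X)) : Subgroup (FundamentalGroup X x) :=
  Subgroup.closure { p | ∃ (y : X) (u : Path x y) (v : Path y y) (U : Set X),
    U ∈ 𝒰 ∧ Set.range v ⊆ U ∧ p = pathClass ((u.trans v).trans u.symm) }

/-- The (unbased) Spanier group `π₁^sp(X, x)`. -/
def spanierGroup (x : X) : Subgroup (FundamentalGroup X x) :=
  ⨅ (𝒰 : Set (Set X)) (_ : ∀ U ∈ 𝒰, IsOpen U) (_ : ⋃₀ 𝒰 = Set.univ), spanierCover x 𝒰

/-- The small generated subgroup `π₁^sg(X, x)`. -/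
def smallGenerated (x : X) : Subgroup (FundamentalGroup X x) :=
  Subgroup.closure { p | ∃ (y : X) (β : Path x y) (α : Path y y),
    HClose α (Path.refl y) ∧ p = pathClass ((β.trans α).trans β.symm) }

/-- `X` is homotopically path Hausdorff relative to `H ⊆ π₁(X, x)`. -/
def HPHausdorffRel (x : X) (H : Set (FundamentalGroup X x)) : Prop :=
  ∀ (y : X) (α β : Path x y), pathClass (α.trans β.symm) ∉ H →
    ∃ (n : ℕ) (t : Fin (n + 1) → I), t 0 = 0 ∧ t (Fin.last n) = 1 ∧ StrictMono t ∧
      ∃ U : Fin n → Set X, (∀ i, IsOpen (U i)) ∧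
        (∀ i : Fin n, α '' Set.Icc (t i.castSucc) (t i.succ) ⊆ U i) ∧
        ∀ γ : Path x y, (∀ i : Fin n, γ '' Set.Icc (t i.castSucc) (t i.succ) ⊆ U i) →
          (∀ i : Fin (n + 1), γ (t i) = α (t i)) → pathClass (γ.trans β.symm) ∉ H

/-!
If `f` is homotopically close to `g` with `[g] ∈ H` but `[f] ∉ H`, then `[g * f⁻¹] ∉ H`, so the
path Hausdorff property gives a partition and open sets around `g` such that no path `γ`
following them has `[γ * f⁻¹] ∈ H`. Homotopic closeness produces such a `γ` homotopic to `f`,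
for which `[γ * f⁻¹] = 1 ∈ H`.
-/

-- Mathlib's fundamental group composes in diagrammatic order.
theorem pathClass_trans {x : X} (f g : Path x x) :
    pathClass (f.trans g) = pathClass g * pathClass f :=
  rfl

theorem pathClass_symm {x : X} (f : Path x x) : pathClass f.symm = (pathClass f)⁻¹ :=
  rfl

theorem pathClass_eq_of_homotopic {x : X} {f g : Path x x} (h : f.Homotopic g) :
    pathClass f = pathClass g :=
  congrArg FundamentalGroup.fromPath (Quotient.sound h)

theorem pathClass_surjective {x : X} : Function.Surjective (pathClass (x := x)) := by
  intro p
  obtain ⟨f, hf⟩ := Quotient.exists_rep (FundamentalGroup.toPath p)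
  exact ⟨f, congrArg FundamentalGroup.fromPath hf⟩

theorem pathClass_trans_symm_of_homotopic {x : X} {f g : Path x x} (h : f.Homotopic g) :
    pathClass (f.trans g.symm) = 1 := by
  rw [pathClass_trans, pathClass_symm, pathClass_eq_of_homotopic h, inv_mul_cancel]

theorem HClose.refl {a b : X} (f : Path a b) : HClose f f :=
  fun _ _ _ _ _ _ _ hcov => ⟨f, hcov, fun _ => rfl, Path.Homotopic.refl f⟩

theorem subset_qsSet (x : X) (H : Set (FundamentalGroup X x)) : H ⊆ qsSet x H := by
  intro p hp
  obtain ⟨f, rfl⟩ := pathClass_surjective p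
  exact ⟨f, f, rfl, hp, HClose.refl f⟩

theorem HPHausdorffRel.pathClass_trans_symm_mem {x : X} {H : Set (FundamentalGroup X x)}
    (hX : HPHausdorffRel x H) (one_mem : (1 : FundamentalGroup X x) ∈ H) {f g : Path x x}
    (hfg : HClose f g) : pathClass (g.trans f.symm) ∈ H := by
  by_contra hnot
  obtain ⟨n, t, ht0, ht1, hmono, U, hopen, hcov, hexcl⟩ := hX x g f hnot
  obtain ⟨γ, hγU, hγt, hγf⟩ := hfg n t ht0 ht1 hmono U hopen hcov
  exact hexcl γ hγU hγt (pathClass_trans_symm_of_homotopic hγf ▸ one_mem)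

theorem HPHausdorffRel.qsSet_subset {x : X} {H : Subgroup (FundamentalGroup X x)}
    (hX : HPHausdorffRel x (H : Set (FundamentalGroup X x))) :
    qsSet x ↑H ⊆ (H : Set (FundamentalGroup X x)) := by
  rintro _ ⟨f, g, rfl, hg, hfg⟩
  have hmem : (pathClass f)⁻¹ * pathClass g ∈ H := by
    simpa only [pathClass_trans, pathClass_symm, SetLike.mem_coe] using
      hX.pathClass_trans_symm_mem H.one_mem hfg
  simpa only [mul_inv_rev, inv_inv, mul_inv_cancel_left, SetLike.mem_coe] using
    H.mul_mem hg (H.inv_mem hmem)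

/-- if `X` is homotopically path Hausdorff relative to a subgroup `H`
of `π₁(X, x)`, then `π_H^qs(X, x) = H`. -/
theorem stmt15 (x : X) (H : Subgroup (FundamentalGroup X x))
    (h : HPHausdorffRel x (H : Set (FundamentalGroup X x))) :
    qsSet x ↑H = (H : Set (FundamentalGroup X x)) :=
  h.qsSet_subset.antisymm (subset_qsSet x H)
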